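/- arXiv:2501.15284 — 3 statements merged into one kernel-verified Lean document; each statement's English description precedes it below -/
import Mathlib

section
/- Let X₁, …, X_B be independent real random variables, each median-unbiased for θ in the sense that P(X_j ≥ θ) ≥ 1/2 and P(X_j ≤ θ) ≥ 1/2 for all j. Then P(min_j X_j ≤ θ ≤ max_j X_j) ≥ 1 - 2^(1-B). -/
open MeasureTheory ProbabilityTheory
open scoped ENNReal

/-!
If θ lies outside the hull of the estimates, then all of them lie strictly on one side of θ.
Median-unbiasedness bounds each strict one-sided event by 1/2, so by independence each of
the two "all on one side" events has probability at most 2^(-B), and their union at most 2^(1-B).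
-/

lemma measure_compl_le_half {Ω : Type*} [MeasurableSpace Ω] {μ : Measure Ω}
    [IsProbabilityMeasure μ] {s : Set Ω} (hs : MeasurableSet s) (h : 1 / 2 ≤ μ s) :
    μ sᶜ ≤ 1 / 2 := by
  rw [prob_compl_eq_one_sub hs]
  calc 1 - μ s ≤ 1 - 1 / 2 := tsub_le_tsub_left h 1
    _ = 1 / 2 := by rw [one_div, ENNReal.one_sub_inv_two]

lemma one_sub_measure_compl_le {Ω : Type*} [MeasurableSpace Ω] (μ : Measure Ω)
    [IsProbabilityMeasure μ] (s : Set Ω) : 1 - μ sᶜ ≤ μ s := by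
  rw [tsub_le_iff_right, ← measure_univ (μ := μ)]
  exact measure_univ_le_add_compl s

lemma ProbabilityTheory.iIndepFun.measure_iInter_preimage_le_pow {Ω ι β : Type*}
    [MeasurableSpace Ω] {μ : Measure Ω} [Fintype ι] [MeasurableSpace β] {X : ι → Ω → β}
    (hX : iIndepFun X μ) {S : Set β} (hS : MeasurableSet S) {p : ℝ≥0∞}
    (hp : ∀ i, μ (X i ⁻¹' S) ≤ p) :
    μ (⋂ i, X i ⁻¹' S) ≤ p ^ Fintype.card ι := by
  rw [hX.meas_iInter fun i => ⟨S, hS, rfl⟩, ← Finset.card_univ, ← Finset.prod_const]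
  exact Finset.prod_le_prod' fun i _ => hp i

lemma forall_lt_or_forall_gt_of_not_iInf_le_and_le_iSup {ι α : Type*} [Finite ι]
    [ConditionallyCompleteLinearOrder α] {f : ι → α} {a : α}
    (h : ¬((⨅ i, f i) ≤ a ∧ a ≤ ⨆ i, f i)) : (∀ i, a < f i) ∨ ∀ i, f i < a := by
  rw [not_and_or, not_le, not_le] at h
  rcases h with h | h
  · exact .inl fun i => h.trans_le (ciInf_le (Set.finite_range f).bddBelow i)
  · exact .inr fun i => (le_ciSup (Set.finite_range f).bddAbove i).trans_lt h

lemma ENNReal.half_pow_add_half_pow (n : ℕ) :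
    (1 / 2 : ℝ≥0∞) ^ n + (1 / 2) ^ n = 2 ^ (1 - (n : ℤ)) := by
  rw [ENNReal.zpow_sub two_ne_zero ENNReal.ofNat_ne_top, zpow_one, zpow_natCast, ← two_mul,
    one_div, ENNReal.inv_pow]

theorem stmt_2_general {Ω : Type*} [MeasurableSpace Ω] (μ : Measure Ω) [IsProbabilityMeasure μ]
    (B : ℕ) (θ : ℝ) (X : Fin B → Ω → ℝ)
    (hmeas : ∀ j, Measurable (X j))
    (hindep : iIndepFun X μ)
    (hge : ∀ j, (1 : ℝ≥0∞) / 2 ≤ μ {ω | θ ≤ X j ω})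
    (hle : ∀ j, (1 : ℝ≥0∞) / 2 ≤ μ {ω | X j ω ≤ θ}) :
    1 - 2 ^ (1 - (B : ℤ)) ≤ μ {ω | (⨅ j, X j ω) ≤ θ ∧ θ ≤ ⨆ j, X j ω} := by
  have hAbove : μ (⋂ j, X j ⁻¹' Set.Ioi θ) ≤ (1 / 2) ^ B := by
    simpa using hindep.measure_iInter_preimage_le_pow measurableSet_Ioi fun j => by
      simpa [Set.preimage, Set.compl_ofPred] using
        measure_compl_le_half (measurableSet_le (hmeas j) measurable_const) (hle j)
  have hBelow : μ (⋂ j, X j ⁻¹' Set.Iio θ) ≤ (1 / 2) ^ B := by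
    simpa using hindep.measure_iInter_preimage_le_pow measurableSet_Iio fun j => by
      simpa [Set.preimage, Set.compl_ofPred] using
        measure_compl_le_half (measurableSet_le measurable_const (hmeas j)) (hge j)
  have hOutside : μ {ω | (⨅ j, X j ω) ≤ θ ∧ θ ≤ ⨆ j, X j ω}ᶜ ≤ 2 ^ (1 - (B : ℤ)) :=
    calc _ ≤ μ ((⋂ j, X j ⁻¹' Set.Ioi θ) ∪ ⋂ j, X j ⁻¹' Set.Iio θ) := by
          refine measure_mono fun ω hω => ?_
          simpa using forall_lt_or_forall_gt_of_not_iInf_le_and_le_iSup hω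
      _ ≤ μ (⋂ j, X j ⁻¹' Set.Ioi θ) + μ (⋂ j, X j ⁻¹' Set.Iio θ) := measure_union_le _ _
      _ ≤ (1 / 2) ^ B + (1 / 2) ^ B := add_le_add hAbove hBelow
      _ = 2 ^ (1 - (B : ℤ)) := ENNReal.half_pow_add_half_pow B
  exact (tsub_le_tsub_left hOutside 1).trans (one_sub_measure_compl_le μ _)

theorem stmt_2 {Ω : Type*} [MeasurableSpace Ω] (μ : Measure Ω) [IsProbabilityMeasure μ]
    (B : ℕ) (hB : 0 < B) (θ : ℝ) (X : Fin B → Ω → ℝ)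
    (hmeas : ∀ j, Measurable (X j))
    (hindep : iIndepFun X μ)
    (hge : ∀ j, (1 : ℝ≥0∞) / 2 ≤ μ {ω | θ ≤ X j ω})
    (hle : ∀ j, (1 : ℝ≥0∞) / 2 ≤ μ {ω | X j ω ≤ θ}) :
    1 - 2 ^ (1 - (B : ℤ)) ≤ μ {ω | (⨅ j, X j ω) ≤ θ ∧ θ ≤ ⨆ j, X j ω} :=
  stmt_2_general μ B θ X hmeas hindep hge hle
end

section
/- With notation as in the RMST variance formula, V(L) = ∫₀^L (θ(L) - θ(v))² g(v) dv is twice differentiable at any point L where S is continuously differentiable, with V''(L) = 2 ∫₀^L [S(L)² - f(L)(θ(L) - θ(v))] g(v) dv, where f = -S'. -/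
open intervalIntegral MeasureTheory Set Filter

theorem stmt_7 (Lmax : ℝ) (hLmax : 0 < Lmax)
    (S f g : ℝ → ℝ)
    (hS : ∀ t, HasDerivAt S (-(f t)) t)
    (hf : Continuous f)
    (hSpos : ∀ t ∈ Set.Icc (0:ℝ) Lmax, 0 < S t)
    (hg : ContinuousOn g (Set.Icc 0 Lmax))
    (hgnn : ∀ t ∈ Set.Icc (0:ℝ) Lmax, 0 ≤ g t) :
    ∀ L ∈ Set.Ioo (0:ℝ) Lmax,
      HasDerivAt
        (deriv (fun x => ∫ v in (0:ℝ)..x,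
          ((∫ u in (0:ℝ)..x, S u) - ∫ u in (0:ℝ)..v, S u) ^ 2 * g v))
        (2 * ∫ v in (0:ℝ)..L,
          ((S L) ^ 2 - f L * ((∫ u in (0:ℝ)..L, S u) - ∫ u in (0:ℝ)..v, S u)) * g v)
        L := by
  intro L hL
  have hScont : Continuous S := continuous_iff_continuousAt.2 fun t => (hS t).continuousAt
  set θ : ℝ → ℝ := fun y => ∫ u in (0:ℝ)..y, S u with hθdef
  have hθ : ∀ x : ℝ, HasDerivAt θ (S x) x := fun x =>
    intervalIntegral.integral_hasDerivAt_right (hScont.intervalIntegrable _ _)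
      (hScont.stronglyMeasurableAtFilter _ _) hScont.continuousAt
  have hθc : Continuous θ := continuous_iff_continuousAt.2 fun x => (hθ x).continuousAt
  set U : Set ℝ := Set.Ioo 0 Lmax with hUdef
  have hUopen : IsOpen U := isOpen_Ioo
  have hUsub : U ⊆ Set.Icc 0 Lmax := Set.Ioo_subset_Icc_self
  have hgU : ContinuousOn g U := hg.mono hUsub
  -- integrands
  set g2 : ℝ → ℝ := fun v => θ v * g v with hg2def
  set g3 : ℝ → ℝ := fun v => θ v ^ 2 * g v with hg3def
  have hg2c : ContinuousOn g2 (Set.Icc 0 Lmax) := (hθc.continuousOn).mul hg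
  have hg3c : ContinuousOn g3 (Set.Icc 0 Lmax) := ((hθc.pow 2).continuousOn).mul hg
  have hsub : ∀ x ∈ Set.Icc (0:ℝ) Lmax, Set.uIcc (0:ℝ) x ⊆ Set.Icc 0 Lmax := fun x hx =>
    Set.uIcc_subset_Icc (Set.left_mem_Icc.2 hLmax.le) hx
  have hInt : ∀ (φ : ℝ → ℝ), ContinuousOn φ (Set.Icc 0 Lmax) →
      ∀ x ∈ Set.Icc (0:ℝ) Lmax, IntervalIntegrable φ MeasureTheory.volume 0 x :=
    fun φ hφ x hx => (hφ.mono (hsub x hx)).intervalIntegrable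
  set A : ℝ → ℝ := fun y => ∫ v in (0:ℝ)..y, g v with hAdef
  set B : ℝ → ℝ := fun y => ∫ v in (0:ℝ)..y, g2 v with hBdef
  set C : ℝ → ℝ := fun y => ∫ v in (0:ℝ)..y, g3 v with hCdef
  have hDer : ∀ (φ : ℝ → ℝ), ContinuousOn φ (Set.Icc 0 Lmax) → ∀ x ∈ U,
      HasDerivAt (fun y => ∫ v in (0:ℝ)..y, φ v) (φ x) x := by
    intro φ hφ x hx
    exact intervalIntegral.integral_hasDerivAt_right (hInt φ hφ x (hUsub hx))
      ((hφ.mono hUsub).stronglyMeasurableAtFilter hUopen x hx)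
      ((hφ.mono hUsub).continuousAt (hUopen.mem_nhds hx))
  have hA := hDer g hg
  have hB := hDer g2 hg2c
  have hC := hDer g3 hg3c
  -- pointwise identity
  have hid : ∀ x ∈ Set.Icc (0:ℝ) Lmax,
      (∫ v in (0:ℝ)..x, (θ x - θ v) ^ 2 * g v)
        = θ x ^ 2 * A x - 2 * θ x * B x + C x := by
    intro x hx
    have e1 : (∫ v in (0:ℝ)..x, (θ x - θ v) ^ 2 * g v)
        = ∫ v in (0:ℝ)..x, (θ x ^ 2 * g v - 2 * θ x * g2 v + g3 v) := by
      apply intervalIntegral.integral_congr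
      intro v _
      simp only [hg2def, hg3def]
      ring
    rw [e1]
    have i1 : IntervalIntegrable (fun v => θ x ^ 2 * g v) MeasureTheory.volume 0 x :=
      (hInt g hg x hx).const_mul _
    have i2 : IntervalIntegrable (fun v => 2 * θ x * g2 v) MeasureTheory.volume 0 x :=
      (hInt g2 hg2c x hx).const_mul _
    have i3 := hInt g3 hg3c x hx
    rw [intervalIntegral.integral_add (i1.sub i2) i3, intervalIntegral.integral_sub i1 i2,
      intervalIntegral.integral_const_mul, intervalIntegral.integral_const_mul]
  -- W function
  set W : ℝ → ℝ := fun x => 2 * S x * (θ x * A x - B x) with hWdef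
  have key1 : ∀ x ∈ U, HasDerivAt
      (fun x => ∫ v in (0:ℝ)..x, (θ x - θ v) ^ 2 * g v) (W x) x := by
    intro x hx
    have hR : HasDerivAt (fun y => θ y ^ 2 * A y - 2 * θ y * B y + C y)
        ((2 * θ x ^ 1 * S x) * A x + θ x ^ 2 * g x
          - ((2 * S x) * B x + 2 * θ x * g2 x) + g3 x) x := by
      exact ((((hθ x).pow 2).mul (hA x hx)).sub
        (((hθ x).const_mul 2).mul (hB x hx))).add (hC x hx)
    have heq : (fun x => ∫ v in (0:ℝ)..x, (θ x - θ v) ^ 2 * g v)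
        =ᶠ[nhds x] (fun y => θ y ^ 2 * A y - 2 * θ y * B y + C y) :=
      Filter.eventuallyEq_of_mem (hUopen.mem_nhds hx) fun y hy => hid y (hUsub hy)
    have := hR.congr_of_eventuallyEq heq
    refine this.congr_deriv ?_
    simp only [hWdef, hg2def, hg3def]
    ring
  have derivEq : deriv (fun x => ∫ v in (0:ℝ)..x, (θ x - θ v) ^ 2 * g v) =ᶠ[nhds L] W :=
    Filter.eventuallyEq_of_mem (hUopen.mem_nhds hL) fun y hy => (key1 y hy).deriv
  have hWD : HasDerivAt W
      ((2 * -f L) * (θ L * A L - B L)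
        + 2 * S L * ((S L * A L + θ L * g L) - g2 L)) L :=
    ((hS L).const_mul 2).mul (((hθ L).mul (hA L hL)).sub (hB L hL))
  have final := hWD.congr_of_eventuallyEq derivEq
  refine final.congr_deriv ?_
  -- value identity
  have i1 : IntervalIntegrable (fun v => S L ^ 2 * g v) MeasureTheory.volume 0 L :=
    (hInt g hg L (hUsub hL)).const_mul _
  have i2 : IntervalIntegrable (fun v => f L * (θ L * g v - g2 v)) MeasureTheory.volume 0 L :=
    (((hInt g hg L (hUsub hL)).const_mul _).sub (hInt g2 hg2c L (hUsub hL))).const_mul _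
  have e1 : (∫ v in (0:ℝ)..L, (S L ^ 2 - f L * (θ L - θ v)) * g v)
      = ∫ v in (0:ℝ)..L, (S L ^ 2 * g v - f L * (θ L * g v - g2 v)) := by
    apply intervalIntegral.integral_congr
    intro v _
    simp only [hg2def]
    ring
  rw [e1, intervalIntegral.integral_sub i1 i2, intervalIntegral.integral_const_mul,
    intervalIntegral.integral_const_mul,
    intervalIntegral.integral_sub ((hInt g hg L (hUsub hL)).const_mul _)
      (hInt g2 hg2c L (hUsub hL)), intervalIntegral.integral_const_mul]
  simp only [hg2def]
  ring
end

section
/- Let V : [L_min, L_max] → ℝ be given by V(L) = ∫₀^L (θ(L) - θ(v))² g(v) dv with θ nondecreasing and g ≥ 0. Then V is nondecreasing in L. -/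
open MeasureTheory

theorem stmt_8 (Lmin Lmax : ℝ) (h0 : 0 ≤ Lmin) (hLL : Lmin ≤ Lmax)
    (θ g : ℝ → ℝ) (hθ : Monotone θ) (hgnn : ∀ v, 0 ≤ g v)
    (hInt : ∀ L ∈ Set.Icc (0:ℝ) Lmax,
      IntervalIntegrable (fun v => (θ L - θ v) ^ 2 * g v) volume 0 Lmax) :
    ∀ s ∈ Set.Icc Lmin Lmax, ∀ t ∈ Set.Icc Lmin Lmax, s ≤ t →
      (∫ v in (0:ℝ)..s, (θ s - θ v) ^ 2 * g v) ≤
        ∫ v in (0:ℝ)..t, (θ t - θ v) ^ 2 * g v := by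
  intro s hs t ht hst
  obtain ⟨hs1, hs2⟩ := hs
  obtain ⟨ht1, ht2⟩ := ht
  have hs0 : (0:ℝ) ≤ s := le_trans h0 hs1
  have ht0 : (0:ℝ) ≤ t := le_trans h0 ht1
  have hIs : IntervalIntegrable (fun v => (θ s - θ v) ^ 2 * g v) volume 0 s :=
    (hInt s ⟨hs0, hs2⟩).mono_set (by
      rw [Set.uIcc_of_le hs0, Set.uIcc_of_le (le_trans hs0 hs2)]
      exact Set.Icc_subset_Icc le_rfl hs2)
  have hIts : IntervalIntegrable (fun v => (θ t - θ v) ^ 2 * g v) volume 0 s :=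
    (hInt t ⟨ht0, ht2⟩).mono_set (by
      rw [Set.uIcc_of_le hs0, Set.uIcc_of_le (le_trans hs0 hs2)]
      exact Set.Icc_subset_Icc le_rfl hs2)
  have hItt : IntervalIntegrable (fun v => (θ t - θ v) ^ 2 * g v) volume s t :=
    (hInt t ⟨ht0, ht2⟩).mono_set (by
      rw [Set.uIcc_of_le hst, Set.uIcc_of_le (le_trans ht0 ht2)]
      exact Set.Icc_subset_Icc hs0 ht2)
  have step1 : (∫ v in (0:ℝ)..s, (θ s - θ v) ^ 2 * g v)
      ≤ ∫ v in (0:ℝ)..s, (θ t - θ v) ^ 2 * g v := by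
    apply intervalIntegral.integral_mono_on hs0 hIs hIts
    intro v hv
    have h1 : θ v ≤ θ s := hθ hv.2
    have h2 : θ s ≤ θ t := hθ hst
    have : (θ s - θ v) ^ 2 ≤ (θ t - θ v) ^ 2 := by
      apply sq_le_sq' <;> nlinarith
    exact mul_le_mul_of_nonneg_right this (hgnn v)
  have step2 : (∫ v in (0:ℝ)..s, (θ t - θ v) ^ 2 * g v)
      ≤ ∫ v in (0:ℝ)..t, (θ t - θ v) ^ 2 * g v := by
    rw [← intervalIntegral.integral_add_adjacent_intervals hIts hItt]
    have : (0:ℝ) ≤ ∫ v in s..t, (θ t - θ v) ^ 2 * g v := by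
      apply intervalIntegral.integral_nonneg hst
      intro v _
      exact mul_nonneg (sq_nonneg _) (hgnn v)
    linarith
  linarith
end
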